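/- Let T be an ABC-tile with 1 ≤ A < B < C and C < 2(B − A) + 2. Then the lattice point s = (2(B−A)+2, 2(A−1), 2) is a neighbor of T, i.e. T ∩ (T + s) ≠ ∅ (and by symmetry T ∩ (T − s) ≠ ∅). -/

import Mathlib

open MeasureTheory

noncomputable def Mmat (A B C : ℤ) : Matrix (Fin 3) (Fin 3) ℝ :=
  !![0, 0, -(C : ℝ); 1, 0, -(B : ℝ); 0, 1, -(A : ℝ)]

def Ddig (C : ℤ) : Set (Fin 3 → ℝ) :=
  {d | ∃ i : ℤ, 0 ≤ i ∧ i < C ∧ d = ![(i : ℝ), 0, 0]}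

def toR (α : Fin 3 → ℤ) : Fin 3 → ℝ := fun i => (α i : ℝ)

def tileTranslate (v : Fin 3 → ℝ) (T : Set (Fin 3 → ℝ)) : Set (Fin 3 → ℝ) :=
  (fun x => x + v) '' T

def IsABCTile (A B C : ℤ) (T : Set (Fin 3 → ℝ)) : Prop :=
  1 ≤ A ∧ A ≤ B ∧ B < C ∧
  T.Nonempty ∧ IsCompact T ∧ 0 < volume T ∧
  (Mmat A B C).mulVec '' T = ⋃ d ∈ Ddig C, tileTranslate d T

def Neighbors (T : Set (Fin 3 → ℝ)) : Set (Fin 3 → ℤ) :=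
  {α | α ≠ 0 ∧ (T ∩ tileTranslate (toR α) T).Nonempty}

/-!
Put `P = M⁻¹`. The set equation makes `T` invariant under `x ↦ P x` and `x ↦ P (x + d)` for every
digit `d`, and the hypothesis `C < 2(B - A) + 2` is what makes `d = (2C - 2(B - A) - 2, 0, 0)` a
digit with `M s + s = -d`. Then the two composites `F x = P (P x + d)` and `G y = P (P (y + d))`
map `T` into `T` and satisfy `G y - F x - s = P² (y - x - s)`, so `Gⁿ x₀ - Fⁿ x₀ → s`. Here `P` is
a contraction in the sense that `Pⁿ → 0`: the eigenvalues of `M`, the roots of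
`X³ + A X² + B X + C`, lie outside the closed unit disc, and Gelfand's formula applies.
Since `T - T` is compact, `s ∈ T - T`.
-/

open Filter Topology Set Matrix

theorem Complex.one_lt_norm_of_cubic_eq_zero {A B C : ℝ} (hA : 1 ≤ A) (hAB : A ≤ B)
    (hBC : B < C) {z : ℂ} (hz : z ^ 3 + A * z ^ 2 + B * z + C = 0) : 1 < ‖z‖ := by
  by_contra! hz1
  -- Eneström–Kakeya: after multiplying by `1 - z`, the coefficients on the right are
  -- nonnegative and sum to `C`, so `‖z‖ ≤ 1` forces `re z ≥ 1`, i.e. `z = 1`.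
  have hC : (C : ℂ) = (C - B) * z + (B - A) * z ^ 2 + (A - 1) * z ^ 3 + z ^ 4 := by
    linear_combination (1 - z) * hz
  have hpow (k : ℕ) : (z ^ k).re ≤ 1 :=
    (re_le_norm _).trans (by simpa using pow_le_one₀ (norm_nonneg z) hz1)
  have hre := congrArg re hC
  simp only [add_re, mul_re, ofReal_re, ofReal_im, zero_mul, sub_zero, ← ofReal_sub,
    ← ofReal_one] at hre
  have hz_re : 1 ≤ z.re := by nlinarith [hpow 2, hpow 3, hpow 4]
  have hz_eq : z = 1 := by
    have hz_re' : z.re = 1 := by linarith [re_le_norm z]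
    have hz_im : z.im ^ 2 ≤ 0 := by nlinarith [sq_norm_sub_sq_re z, norm_nonneg z]
    exact Complex.ext hz_re' (by simpa using hz_im)
  have h1 : ((1 + A + B + C : ℝ) : ℂ) = 0 := by
    rw [← hz, hz_eq]
    push_cast
    ring
  have : 1 + A + B + C = 0 := by exact_mod_cast h1
  linarith

theorem tendsto_pow_atTop_nhds_zero_of_spectralRadius_lt_one {A : Type*} [NormedRing A]
    [NormedAlgebra ℂ A] [CompleteSpace A] {a : A} (ha : spectralRadius ℂ a < 1) :
    Tendsto (fun n : ℕ => a ^ n) atTop (𝓝 0) := by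
  obtain ⟨r, hr, hr1⟩ := ENNReal.lt_iff_exists_nnreal_btwn.mp ha
  have hroot : ∀ᶠ n : ℕ in atTop, ENNReal.ofReal (‖a ^ n‖ ^ (1 / n : ℝ)) < r :=
    (spectrum.pow_norm_pow_one_div_tendsto_nhds_spectralRadius a).eventually_lt_const hr
  refine squeeze_zero_norm' ?_ (tendsto_pow_atTop_nhds_zero_of_lt_one r.2 (by exact_mod_cast hr1))
  filter_upwards [hroot, eventually_gt_atTop 0] with n hn hn0
  rw [ENNReal.ofReal_lt_iff_lt_toReal (by positivity) ENNReal.coe_ne_top, ENNReal.coe_toReal,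
    one_div] at hn
  simpa using ((Real.rpow_inv_lt_iff_of_pos (norm_nonneg _) r.2 (by positivity)).mp hn).le

theorem Matrix.tendsto_pow_atTop_nhds_zero_of_forall_mem_spectrum {n : Type*} [Fintype n]
    [DecidableEq n] [Nonempty n] (Q : Matrix n n ℝ)
    (hQ : ∀ z ∈ spectrum ℂ (Q.map Complex.ofRealHom), ‖z‖ < 1) :
    Tendsto (fun k : ℕ => Q ^ k) atTop (𝓝 0) := by
  let : NormedRing (Matrix n n ℂ) := Matrix.linftyOpNormedRing
  let : NormedAlgebra ℂ (Matrix n n ℂ) := Matrix.linftyOpNormedAlgebra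
  have : CompleteSpace (Matrix n n ℂ) := FiniteDimensional.complete ℂ _
  have hc : Tendsto (fun k : ℕ => Q.map Complex.ofRealHom ^ k) atTop (𝓝 0) :=
    tendsto_pow_atTop_nhds_zero_of_spectralRadius_lt_one <| by
      simpa using spectrum.spectralRadius_lt_of_forall_lt (r := 1) _
        fun z hz => by exact_mod_cast hQ z hz
  have hre := ((continuous_id.matrix_map Complex.continuous_re).tendsto 0).comp hc
  convert hre using 1
  · ext k : 1
    have hpow : (Q ^ k).map Complex.ofRealHom = Q.map Complex.ofRealHom ^ k :=
      map_pow Complex.ofRealHom.mapMatrix Q k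
    simp [← hpow, map_map, Function.comp_def]
  · simp

theorem Matrix.iterate_mulVec {n R : Type*} [Fintype n] [DecidableEq n] [Semiring R]
    (Q : Matrix n n R) (k : ℕ) (v : n → R) : Q.mulVec^[k] v = (Q ^ k) *ᵥ v := by
  induction k with
  | zero => simp
  | succ k ih => rw [Function.iterate_succ_apply', ih, mulVec_mulVec, pow_succ']

theorem IsCompact.exists_add_mem_of_tendsto_iterate {E : Type*} [AddCommGroup E]
    [TopologicalSpace E] [IsTopologicalAddGroup E] [T2Space E] {T : Set E} (hT : IsCompact T)
    (hne : T.Nonempty) {F G L : E → E} (hF : MapsTo F T T) (hG : MapsTo G T T) {s : E}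
    (hFG : ∀ x y, G y - F x - s = L (y - x - s))
    (hL : Tendsto (fun n => L^[n] (-s)) atTop (𝓝 0)) :
    ∃ x ∈ T, x + s ∈ T := by
  obtain ⟨x₀, hx₀⟩ := hne
  have hdiff (n : ℕ) : G^[n] x₀ - F^[n] x₀ - s = L^[n] (-s) := by
    induction n with
    | zero => simp
    | succ n ih => rw [Function.iterate_succ_apply', Function.iterate_succ_apply', hFG, ih,
        Function.iterate_succ_apply']
  have hlim : Tendsto (fun n => G^[n] x₀ - F^[n] x₀) atTop (𝓝 s) := by
    simpa [← hdiff] using hL.add_const s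
  obtain ⟨⟨y, x⟩, ⟨hy, hx⟩, hyx⟩ : s ∈ (fun p : E × E => p.1 - p.2) '' T ×ˢ T :=
    ((hT.prod hT).image continuous_sub).isClosed.mem_of_tendsto hlim <| .of_forall fun n =>
      ⟨(_, _), ⟨hG.iterate n hx₀, hF.iterate n hx₀⟩, rfl⟩
  exact ⟨x, hx, by rwa [← hyx, add_sub_cancel]⟩

theorem AddMonoidHom.map_map_sub_of_add_map_add_map_eq_zero {E : Type*} [AddCommGroup E]
    (P : E →+ E) {s d : E} (h : s + P s + P d = 0) (x y : E) :
    P (P (y + d)) - P (P x + d) - s = P (P (y - x - s)) := by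
  have hP := congrArg P h
  simp only [map_add, map_sub, map_zero] at hP ⊢
  linear_combination (norm := abel) hP - h

theorem det_Mmat (A B C : ℤ) : (Mmat A B C).det = -C := by
  simp [det_fin_three, Mmat]

theorem isUnit_det_Mmat {A B C : ℤ} (hC : C ≠ 0) : IsUnit (Mmat A B C).det := by
  rwa [det_Mmat, isUnit_iff_ne_zero, neg_ne_zero, Int.cast_ne_zero]

theorem charpoly_Mmat (A B C : ℤ) :
    (Mmat A B C).charpoly = .X ^ 3 + .C (A : ℝ) * .X ^ 2 + .C (B : ℝ) * .X + .C (C : ℝ) := by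
  simp [charpoly, det_fin_three, Mmat]
  ring

theorem norm_lt_one_of_mem_spectrum_inv_Mmat {A B C : ℤ} (hA : 1 ≤ A) (hAB : A ≤ B)
    (hBC : B < C) {z : ℂ} (hz : z ∈ spectrum ℂ ((Mmat A B C)⁻¹.map Complex.ofRealHom)) :
    ‖z‖ < 1 := by
  rcases eq_or_ne z 0 with rfl | hz0
  · simp
  have hdet := isUnit_det_Mmat (A := A) (B := B) (C := C) (by omega)
  let u : (Matrix (Fin 3) (Fin 3) ℝ)ˣ :=
    ⟨_, _, mul_nonsing_inv _ hdet, nonsing_inv_mul _ hdet⟩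
  let uc := Units.map Complex.ofRealHom.mapMatrix.toMonoidHom u
  change z ∈ spectrum ℂ (↑uc⁻¹ : Matrix (Fin 3) (Fin 3) ℂ) at hz
  rw [← spectrum.inv₀_mem_iff, mem_spectrum_iff_isRoot_charpoly] at hz
  change ((Mmat A B C).map Complex.ofRealHom).charpoly.IsRoot z⁻¹ at hz
  rw [charpoly_map, charpoly_Mmat] at hz
  have hroot : 1 < ‖z⁻¹‖ :=
    Complex.one_lt_norm_of_cubic_eq_zero (A := A) (B := B) (C := C) (by exact_mod_cast hA)
      (by exact_mod_cast hAB) (by exact_mod_cast hBC) (by simpa using hz)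
  rw [norm_inv] at hroot
  exact (one_lt_inv₀ (norm_pos_iff.mpr hz0)).mp hroot

theorem zero_mem_Ddig {C : ℤ} (hC : 0 < C) : 0 ∈ Ddig C :=
  ⟨0, le_rfl, hC, by ext i; fin_cases i <;> simp⟩

namespace IsABCTile

variable {A B C : ℤ} {T : Set (Fin 3 → ℝ)}

theorem isUnit_det (hT : IsABCTile A B C T) : IsUnit (Mmat A B C).det :=
  isUnit_det_Mmat (by linarith [hT.1, hT.2.1, hT.2.2.1])

theorem inv_mulVec_add_mem (hT : IsABCTile A B C T) {d : Fin 3 → ℝ} (hd : d ∈ Ddig C)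
    {x : Fin 3 → ℝ} (hx : x ∈ T) : (Mmat A B C)⁻¹ *ᵥ (x + d) ∈ T := by
  have ⟨_, _, _, _, _, _, hset⟩ := hT
  obtain ⟨y, hy, hxy⟩ : x + d ∈ (Mmat A B C).mulVec '' T :=
    hset ▸ mem_biUnion hd ⟨x, hx, rfl⟩
  rwa [← hxy, mulVec_mulVec, nonsing_inv_mul _ hT.isUnit_det, one_mulVec]

theorem tendsto_iterate_inv_mulVec (hT : IsABCTile A B C T) (v : Fin 3 → ℝ) :
    Tendsto (fun k => (Mmat A B C)⁻¹.mulVec^[k] v) atTop (𝓝 0) := by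
  have hpow := tendsto_pow_atTop_nhds_zero_of_forall_mem_spectrum (Mmat A B C)⁻¹
    fun z hz => norm_lt_one_of_mem_spectrum_inv_Mmat hT.1 hT.2.1 hT.2.2.1 hz
  have hmulVec : Continuous fun Q : Matrix (Fin 3) (Fin 3) ℝ => Q *ᵥ v :=
    continuous_id.matrix_mulVec continuous_const
  have h := (hmulVec.tendsto 0).comp hpow
  rw [zero_mulVec] at h
  simp_rw [iterate_mulVec]
  exact h

end IsABCTile

theorem Mmat_mulVec_add_self (A B C : ℤ) :
    Mmat A B C *ᵥ toR ![2 * (B - A) + 2, 2 * (A - 1), 2] + toR ![2 * (B - A) + 2, 2 * (A - 1), 2]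
      = -![((2 * C - (2 * (B - A) + 2) : ℤ) : ℝ), 0, 0] := by
  ext i
  fin_cases i <;> simp [Mmat, toR, vecHead, vecTail] <;> ring

theorem toR_neg (α : Fin 3 → ℤ) : toR (-α) = -toR α := by
  ext i
  simp [toR]

theorem nonempty_inter_tileTranslate_neg {T : Set (Fin 3 → ℝ)} {v : Fin 3 → ℝ}
    (h : (T ∩ tileTranslate v T).Nonempty) : (T ∩ tileTranslate (-v) T).Nonempty := by
  obtain ⟨y, hy, x, hx, rfl⟩ := h
  exact ⟨x, hx, x + v, hy, by simp⟩

theorem stmt10_general (A B C : ℤ) (T : Set (Fin 3 → ℝ)) (hT : IsABCTile A B C T)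
    (hC : C < 2 * (B - A) + 2) :
    (T ∩ tileTranslate (toR ![2 * (B - A) + 2, 2 * (A - 1), 2]) T).Nonempty ∧
    (T ∩ tileTranslate (toR (-![2 * (B - A) + 2, 2 * (A - 1), 2])) T).Nonempty := by
  have ⟨hA, _, hBC, hne, hcpt, _, _⟩ := hT
  set P := (Mmat A B C)⁻¹
  set s := toR ![2 * (B - A) + 2, 2 * (A - 1), 2]
  set d : Fin 3 → ℝ := ![((2 * C - (2 * (B - A) + 2) : ℤ) : ℝ), 0, 0]
  have hd : d ∈ Ddig C := ⟨_, by omega, by omega, rfl⟩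
  have hsd : s + P *ᵥ s + P *ᵥ d = 0 := by
    have h : Mmat A B C *ᵥ s + s = -d := Mmat_mulVec_add_self A B C
    replace h := congrArg (P *ᵥ ·) h
    have hP : P * Mmat A B C = 1 := nonsing_inv_mul _ hT.isUnit_det
    simp only [mulVec_add, mulVec_neg, mulVec_mulVec, hP, one_mulVec] at h
    rw [h, neg_add_cancel]
  have hstep : MapsTo (fun x => P *ᵥ (x + d)) T T := fun x hx => hT.inv_mulVec_add_mem hd hx
  have hstep₀ : MapsTo (P *ᵥ ·) T T := fun x hx => by
    simpa using hT.inv_mulVec_add_mem (zero_mem_Ddig (by omega)) hx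
  have hL : Tendsto (fun n => (P.mulVec^[2])^[n] (-s)) atTop (𝓝 0) := by
    simp_rw [← Function.iterate_mul]
    exact (hT.tendsto_iterate_inv_mulVec (-s)).comp (tendsto_id.const_mul_atTop' two_pos)
  obtain ⟨x, hx, hxs⟩ := hcpt.exists_add_mem_of_tendsto_iterate hne
    (hstep.comp hstep₀) (hstep₀.comp hstep)
    ((mulVecLin P).toAddMonoidHom.map_map_sub_of_add_map_add_map_eq_zero hsd) hL
  have hneighbor : (T ∩ tileTranslate s T).Nonempty := ⟨x + s, hxs, x, hx, rfl⟩
  rw [toR_neg]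
  exact ⟨hneighbor, nonempty_inter_tileTranslate_neg hneighbor⟩

theorem stmt10 (A B C : ℤ) (T : Set (Fin 3 → ℝ)) (hT : IsABCTile A B C T)
    (hAB : A < B) (hC : C < 2 * (B - A) + 2) :
    (T ∩ tileTranslate (toR ![2 * (B - A) + 2, 2 * (A - 1), 2]) T).Nonempty ∧
    (T ∩ tileTranslate (toR (-![2 * (B - A) + 2, 2 * (A - 1), 2])) T).Nonempty :=
  stmt10_general A B C T hT hC
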